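/- arXiv:1806.08400 — 5 statements merged into one kernel-verified Lean document; each statement's English description precedes it below -/
import Mathlib

section
/- The 4×4 matrix R̂ with rows (a,y,x,b), (y,a,b,x), (x,b,a,y), (b,x,y,a), for arbitrary complex a,b,x,y, satisfies the quantum Yang–Baxter equation R̂₁₂R̂₁₃R̂₂₃ = R̂₂₃R̂₁₃R̂₁₂ on C²⊗C²⊗C². -/
open Matrix

noncomputable def kron {m n : ℕ} (A : Matrix (Fin m) (Fin m) ℂ) (B : Matrix (Fin n) (Fin n) ℂ) :
    Matrix (Fin (m * n)) (Fin (m * n)) ℂ :=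
  fun i j => A i.divNat j.divNat * B i.modNat j.modNat

theorem cv8_0 {α : Type*} (x0 x1 x2 x3 x4 x5 x6 x7 : α) :
    ![x0,x1,x2,x3,x4,x5,x6,x7] (0 : Fin 8) = x0 := rfl
theorem cv8_1 {α : Type*} (x0 x1 x2 x3 x4 x5 x6 x7 : α) :
    ![x0,x1,x2,x3,x4,x5,x6,x7] (1 : Fin 8) = x1 := rfl
theorem cv8_2 {α : Type*} (x0 x1 x2 x3 x4 x5 x6 x7 : α) :
    ![x0,x1,x2,x3,x4,x5,x6,x7] (2 : Fin 8) = x2 := rfl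
theorem cv8_3 {α : Type*} (x0 x1 x2 x3 x4 x5 x6 x7 : α) :
    ![x0,x1,x2,x3,x4,x5,x6,x7] (3 : Fin 8) = x3 := rfl
theorem cv8_4 {α : Type*} (x0 x1 x2 x3 x4 x5 x6 x7 : α) :
    ![x0,x1,x2,x3,x4,x5,x6,x7] (4 : Fin 8) = x4 := rfl
theorem cv8_5 {α : Type*} (x0 x1 x2 x3 x4 x5 x6 x7 : α) :
    ![x0,x1,x2,x3,x4,x5,x6,x7] (5 : Fin 8) = x5 := rfl
theorem cv8_6 {α : Type*} (x0 x1 x2 x3 x4 x5 x6 x7 : α) :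
    ![x0,x1,x2,x3,x4,x5,x6,x7] (6 : Fin 8) = x6 := rfl
theorem cv8_7 {α : Type*} (x0 x1 x2 x3 x4 x5 x6 x7 : α) :
    ![x0,x1,x2,x3,x4,x5,x6,x7] (7 : Fin 8) = x7 := rfl
theorem cvm8_0 {α : Type*} (x0 x1 x2 x3 x4 x5 x6 x7 : α) (h : 0 < 8) :
    ![x0,x1,x2,x3,x4,x5,x6,x7] (⟨0,h⟩ : Fin 8) = x0 := rfl
theorem cvm8_1 {α : Type*} (x0 x1 x2 x3 x4 x5 x6 x7 : α) (h : 1 < 8) :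
    ![x0,x1,x2,x3,x4,x5,x6,x7] (⟨1,h⟩ : Fin 8) = x1 := rfl
theorem cvm8_2 {α : Type*} (x0 x1 x2 x3 x4 x5 x6 x7 : α) (h : 2 < 8) :
    ![x0,x1,x2,x3,x4,x5,x6,x7] (⟨2,h⟩ : Fin 8) = x2 := rfl
theorem cvm8_3 {α : Type*} (x0 x1 x2 x3 x4 x5 x6 x7 : α) (h : 3 < 8) :
    ![x0,x1,x2,x3,x4,x5,x6,x7] (⟨3,h⟩ : Fin 8) = x3 := rfl
theorem cvm8_4 {α : Type*} (x0 x1 x2 x3 x4 x5 x6 x7 : α) (h : 4 < 8) :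
    ![x0,x1,x2,x3,x4,x5,x6,x7] (⟨4,h⟩ : Fin 8) = x4 := rfl
theorem cvm8_5 {α : Type*} (x0 x1 x2 x3 x4 x5 x6 x7 : α) (h : 5 < 8) :
    ![x0,x1,x2,x3,x4,x5,x6,x7] (⟨5,h⟩ : Fin 8) = x5 := rfl
theorem cvm8_6 {α : Type*} (x0 x1 x2 x3 x4 x5 x6 x7 : α) (h : 6 < 8) :
    ![x0,x1,x2,x3,x4,x5,x6,x7] (⟨6,h⟩ : Fin 8) = x6 := rfl
theorem cvm8_7 {α : Type*} (x0 x1 x2 x3 x4 x5 x6 x7 : α) (h : 7 < 8) :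
    ![x0,x1,x2,x3,x4,x5,x6,x7] (⟨7,h⟩ : Fin 8) = x7 := rfl
theorem finv8_0 : ((0 : Fin 8) : ℕ) = 0 := rfl
theorem finv8_1 : ((1 : Fin 8) : ℕ) = 1 := rfl
theorem finv8_2 : ((2 : Fin 8) : ℕ) = 2 := rfl
theorem finv8_3 : ((3 : Fin 8) : ℕ) = 3 := rfl
theorem finv8_4 : ((4 : Fin 8) : ℕ) = 4 := rfl
theorem finv8_5 : ((5 : Fin 8) : ℕ) = 5 := rfl
theorem finv8_6 : ((6 : Fin 8) : ℕ) = 6 := rfl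
theorem finv8_7 : ((7 : Fin 8) : ℕ) = 7 := rfl
theorem cv4_0 {α : Type*} (x0 x1 x2 x3 : α) : ![x0,x1,x2,x3] (0 : Fin 4) = x0 := rfl
theorem cv4_1 {α : Type*} (x0 x1 x2 x3 : α) : ![x0,x1,x2,x3] (1 : Fin 4) = x1 := rfl
theorem cv4_2 {α : Type*} (x0 x1 x2 x3 : α) : ![x0,x1,x2,x3] (2 : Fin 4) = x2 := rfl
theorem cv4_3 {α : Type*} (x0 x1 x2 x3 : α) : ![x0,x1,x2,x3] (3 : Fin 4) = x3 := rfl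

set_option maxHeartbeats 1000000 in
theorem hk12 (a b x y : ℂ) :
    kron !![a, y, x, b; y, a, b, x; x, b, a, y; b, x, y, a] (1 : Matrix (Fin 2) (Fin 2) ℂ) = (!![a, 0, y, 0, x, 0, b, 0;
      0, a, 0, y, 0, x, 0, b;
      y, 0, a, 0, b, 0, x, 0;
      0, y, 0, a, 0, b, 0, x;
      x, 0, b, 0, a, 0, y, 0;
      0, x, 0, b, 0, a, 0, y;
      b, 0, x, 0, y, 0, a, 0;
      0, b, 0, x, 0, y, 0, a] : Matrix (Fin 8) (Fin 8) ℂ) := by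
  ext i j
  fin_cases i <;> fin_cases j <;> (try simp [kron, Fin.divNat, Fin.modNat, Matrix.one_apply, finv8_0, finv8_1, finv8_2, finv8_3, finv8_4, finv8_5, finv8_6, finv8_7, cv8_0, cv8_1, cv8_2, cv8_3, cv8_4, cv8_5, cv8_6, cv8_7, cv4_0, cv4_1, cv4_2, cv4_3, Matrix.vecHead, Matrix.vecTail, Function.comp]) <;> (try rfl)

set_option maxHeartbeats 1000000 in
theorem hk23 (a b x y : ℂ) :
    kron (1 : Matrix (Fin 2) (Fin 2) ℂ) !![a, y, x, b; y, a, b, x; x, b, a, y; b, x, y, a] = (!![a, y, x, b, 0, 0, 0, 0;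
      y, a, b, x, 0, 0, 0, 0;
      x, b, a, y, 0, 0, 0, 0;
      b, x, y, a, 0, 0, 0, 0;
      0, 0, 0, 0, a, y, x, b;
      0, 0, 0, 0, y, a, b, x;
      0, 0, 0, 0, x, b, a, y;
      0, 0, 0, 0, b, x, y, a] : Matrix (Fin 8) (Fin 8) ℂ) := by
  ext i j
  fin_cases i <;> fin_cases j <;> (try simp [kron, Fin.divNat, Fin.modNat, Matrix.one_apply, finv8_0, finv8_1, finv8_2, finv8_3, finv8_4, finv8_5, finv8_6, finv8_7, cv8_0, cv8_1, cv8_2, cv8_3, cv8_4, cv8_5, cv8_6, cv8_7, cv4_0, cv4_1, cv4_2, cv4_3, Matrix.vecHead, Matrix.vecTail, Function.comp]) <;> (try rfl)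

set_option maxHeartbeats 1000000 in
theorem hkS :
    kron (1 : Matrix (Fin 2) (Fin 2) ℂ) (!![1, 0, 0, 0; 0, 0, 1, 0; 0, 1, 0, 0; 0, 0, 0, 1] : Matrix (Fin 4) (Fin 4) ℂ) =
    (!![1, 0, 0, 0, 0, 0, 0, 0;
      0, 0, 1, 0, 0, 0, 0, 0;
      0, 1, 0, 0, 0, 0, 0, 0;
      0, 0, 0, 1, 0, 0, 0, 0;
      0, 0, 0, 0, 1, 0, 0, 0;
      0, 0, 0, 0, 0, 0, 1, 0;
      0, 0, 0, 0, 0, 1, 0, 0;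
      0, 0, 0, 0, 0, 0, 0, 1] : Matrix (Fin 8) (Fin 8) ℂ) := by
  ext i j
  fin_cases i <;> fin_cases j <;> (try simp [kron, Fin.divNat, Fin.modNat, Matrix.one_apply, finv8_0, finv8_1, finv8_2, finv8_3, finv8_4, finv8_5, finv8_6, finv8_7, cv8_0, cv8_1, cv8_2, cv8_3, cv8_4, cv8_5, cv8_6, cv8_7, cv4_0, cv4_1, cv4_2, cv4_3, Matrix.vecHead, Matrix.vecTail, Function.comp]) <;> (try rfl)

set_option maxHeartbeats 1000000 in
theorem aux13 (a b x y : ℂ) :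
    (!![1, 0, 0, 0, 0, 0, 0, 0;
      0, 0, 1, 0, 0, 0, 0, 0;
      0, 1, 0, 0, 0, 0, 0, 0;
      0, 0, 0, 1, 0, 0, 0, 0;
      0, 0, 0, 0, 1, 0, 0, 0;
      0, 0, 0, 0, 0, 0, 1, 0;
      0, 0, 0, 0, 0, 1, 0, 0;
      0, 0, 0, 0, 0, 0, 0, 1] : Matrix (Fin 8) (Fin 8) ℂ) * !![a, 0, y, 0, x, 0, b, 0;
      0, a, 0, y, 0, x, 0, b;
      y, 0, a, 0, b, 0, x, 0;
      0, y, 0, a, 0, b, 0, x;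
      x, 0, b, 0, a, 0, y, 0;
      0, x, 0, b, 0, a, 0, y;
      b, 0, x, 0, y, 0, a, 0;
      0, b, 0, x, 0, y, 0, a] * !![1, 0, 0, 0, 0, 0, 0, 0;
      0, 0, 1, 0, 0, 0, 0, 0;
      0, 1, 0, 0, 0, 0, 0, 0;
      0, 0, 0, 1, 0, 0, 0, 0;
      0, 0, 0, 0, 1, 0, 0, 0;
      0, 0, 0, 0, 0, 0, 1, 0;
      0, 0, 0, 0, 0, 1, 0, 0;
      0, 0, 0, 0, 0, 0, 0, 1] = !![a, y, 0, 0, x, b, 0, 0;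
      y, a, 0, 0, b, x, 0, 0;
      0, 0, a, y, 0, 0, x, b;
      0, 0, y, a, 0, 0, b, x;
      x, b, 0, 0, a, y, 0, 0;
      b, x, 0, 0, y, a, 0, 0;
      0, 0, x, b, 0, 0, a, y;
      0, 0, b, x, 0, 0, y, a] := by
  ext i j
  fin_cases i <;> fin_cases j <;>
    · simp only [Matrix.mul_apply, Fin.sum_univ_eight, Matrix.of_apply, cv8_0, cv8_1, cv8_2, cv8_3, cv8_4, cv8_5, cv8_6, cv8_7, cvm8_0, cvm8_1, cvm8_2, cvm8_3, cvm8_4, cvm8_5, cvm8_6, cvm8_7]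
      ring

set_option maxHeartbeats 1000000 in
theorem aux2 (a b x y : ℂ) :
    (!![a, 0, y, 0, x, 0, b, 0;
      0, a, 0, y, 0, x, 0, b;
      y, 0, a, 0, b, 0, x, 0;
      0, y, 0, a, 0, b, 0, x;
      x, 0, b, 0, a, 0, y, 0;
      0, x, 0, b, 0, a, 0, y;
      b, 0, x, 0, y, 0, a, 0;
      0, b, 0, x, 0, y, 0, a] : Matrix (Fin 8) (Fin 8) ℂ) * !![a, y, 0, 0, x, b, 0, 0;
      y, a, 0, 0, b, x, 0, 0;
      0, 0, a, y, 0, 0, x, b;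
      0, 0, y, a, 0, 0, b, x;
      x, b, 0, 0, a, y, 0, 0;
      b, x, 0, 0, y, a, 0, 0;
      0, 0, x, b, 0, 0, a, y;
      0, 0, b, x, 0, 0, y, a] * !![a, y, x, b, 0, 0, 0, 0;
      y, a, b, x, 0, 0, 0, 0;
      x, b, a, y, 0, 0, 0, 0;
      b, x, y, a, 0, 0, 0, 0;
      0, 0, 0, 0, a, y, x, b;
      0, 0, 0, 0, y, a, b, x;
      0, 0, 0, 0, x, b, a, y;
      0, 0, 0, 0, b, x, y, a] =
    (!![a, y, x, b, 0, 0, 0, 0;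
      y, a, b, x, 0, 0, 0, 0;
      x, b, a, y, 0, 0, 0, 0;
      b, x, y, a, 0, 0, 0, 0;
      0, 0, 0, 0, a, y, x, b;
      0, 0, 0, 0, y, a, b, x;
      0, 0, 0, 0, x, b, a, y;
      0, 0, 0, 0, b, x, y, a] : Matrix (Fin 8) (Fin 8) ℂ) * !![a, y, 0, 0, x, b, 0, 0;
      y, a, 0, 0, b, x, 0, 0;
      0, 0, a, y, 0, 0, x, b;
      0, 0, y, a, 0, 0, b, x;
      x, b, 0, 0, a, y, 0, 0;
      b, x, 0, 0, y, a, 0, 0;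
      0, 0, x, b, 0, 0, a, y;
      0, 0, b, x, 0, 0, y, a] * !![a, 0, y, 0, x, 0, b, 0;
      0, a, 0, y, 0, x, 0, b;
      y, 0, a, 0, b, 0, x, 0;
      0, y, 0, a, 0, b, 0, x;
      x, 0, b, 0, a, 0, y, 0;
      0, x, 0, b, 0, a, 0, y;
      b, 0, x, 0, y, 0, a, 0;
      0, b, 0, x, 0, y, 0, a] := by
  ext i j
  fin_cases i <;> fin_cases j <;>
    · simp only [Matrix.mul_apply, Fin.sum_univ_eight, Matrix.of_apply, cv8_0, cv8_1, cv8_2, cv8_3, cv8_4, cv8_5, cv8_6, cv8_7, cvm8_0, cvm8_1, cvm8_2, cvm8_3, cvm8_4, cvm8_5, cvm8_6, cvm8_7]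
      ring

/-- the 4×4 matrix `R̂` satisfies the quantum Yang–Baxter equation
`R̂₁₂ R̂₁₃ R̂₂₃ = R̂₂₃ R̂₁₃ R̂₁₂` on `C²⊗C²⊗C²`. -/
theorem stmt6 (a b x y : ℂ) :
    let Rhat : Matrix (Fin 4) (Fin 4) ℂ :=
      !![a, y, x, b; y, a, b, x; x, b, a, y; b, x, y, a]
    let S : Matrix (Fin 4) (Fin 4) ℂ :=
      !![1, 0, 0, 0; 0, 0, 1, 0; 0, 1, 0, 0; 0, 0, 0, 1]
    let I2 : Matrix (Fin 2) (Fin 2) ℂ := 1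
    let R12 := kron Rhat I2
    let R23 := kron I2 Rhat
    let R13 := kron I2 S * kron Rhat I2 * kron I2 S
    R12 * R13 * R23 = R23 * R13 * R12 := by
  intro Rhat S I2 R12 R23 R13
  have h12 : R12 = (!![a, 0, y, 0, x, 0, b, 0;
      0, a, 0, y, 0, x, 0, b;
      y, 0, a, 0, b, 0, x, 0;
      0, y, 0, a, 0, b, 0, x;
      x, 0, b, 0, a, 0, y, 0;
      0, x, 0, b, 0, a, 0, y;
      b, 0, x, 0, y, 0, a, 0;
      0, b, 0, x, 0, y, 0, a] : Matrix (Fin 8) (Fin 8) ℂ) := hk12 a b x y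
  have h23 : R23 = (!![a, y, x, b, 0, 0, 0, 0;
      y, a, b, x, 0, 0, 0, 0;
      x, b, a, y, 0, 0, 0, 0;
      b, x, y, a, 0, 0, 0, 0;
      0, 0, 0, 0, a, y, x, b;
      0, 0, 0, 0, y, a, b, x;
      0, 0, 0, 0, x, b, a, y;
      0, 0, 0, 0, b, x, y, a] : Matrix (Fin 8) (Fin 8) ℂ) := hk23 a b x y
  have hK : kron I2 S = (!![1, 0, 0, 0, 0, 0, 0, 0;
      0, 0, 1, 0, 0, 0, 0, 0;
      0, 1, 0, 0, 0, 0, 0, 0;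
      0, 0, 0, 1, 0, 0, 0, 0;
      0, 0, 0, 0, 1, 0, 0, 0;
      0, 0, 0, 0, 0, 0, 1, 0;
      0, 0, 0, 0, 0, 1, 0, 0;
      0, 0, 0, 0, 0, 0, 0, 1] : Matrix (Fin 8) (Fin 8) ℂ) := hkS
  have h13 : R13 = (!![a, y, 0, 0, x, b, 0, 0;
      y, a, 0, 0, b, x, 0, 0;
      0, 0, a, y, 0, 0, x, b;
      0, 0, y, a, 0, 0, b, x;
      x, b, 0, 0, a, y, 0, 0;
      b, x, 0, 0, y, a, 0, 0;
      0, 0, x, b, 0, 0, a, y;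
      0, 0, b, x, 0, 0, y, a] : Matrix (Fin 8) (Fin 8) ℂ) := by
    rw [show R13 = kron I2 S * R12 * kron I2 S from rfl, hK, h12]
    exact aux13 a b x y
  rw [h12, h23, h13]
  exact aux2 a b x y
end

section
/- The 9×9 matrix R₉ (with entries a₁,b₁,x₁,y₁,a₂,b₂,x arranged as in the paper: R₁₁=a₁, R₁₃=x₁, R₁₇=y₁, R₁₉=b₁, R₂₄=a₂, R₂₆=b₂, R₃₁=y₁, R₃₃=b₁, R₃₇=a₁, R₃₉=x₁, R₄₂=a₂, R₄₈=b₂, R₅₅=x, R₆₂=b₂, R₆₈=a₂, R₇₁=x₁, R₇₃=a₁, R₇₇=b₁, R₇₉=y₁, R₈₄=b₂, R₈₆=a₂, R₉₁=b₁, R₉₃=y₁, R₉₇=x₁, R₉₉=a₁, zeros elsewhere) is unitary if and only if: |x|² = 1; for i=1: |a₁|²+|b₁|²+|x₁|²+|y₁|²=1 and x₁·conj(a₁)+a₁·conj(x₁)+y₁·conj(b₁)+b₁·conj(y₁)=0 and x₁·conj(b₁)+b₁·conj(x₁)+y₁·conj(a₁)+a₁·conj(y₁)=0 and a₁·conj(b₁)+b₁·conj(a₁)+x₁·conj(y₁)+y₁·conj(x₁)=0;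 and for i=2: |a₂|²+|b₂|²=1 and a₂·conj(b₂)+b₂·conj(a₂)=0. -/
open Matrix

/-- The 9×9 matrix `R₉` of the paper. -/
noncomputable def R9 (a₁ a₂ b₁ b₂ x₁ y₁ x : ℂ) : Matrix (Fin 9) (Fin 9) ℂ :=
  !![a₁, 0, x₁, 0, 0, 0, y₁, 0, b₁;
     0, 0, 0, a₂, 0, b₂, 0, 0, 0;
     y₁, 0, b₁, 0, 0, 0, a₁, 0, x₁;
     0, a₂, 0, 0, 0, 0, 0, b₂, 0;
     0, 0, 0, 0, x, 0, 0, 0, 0;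
     0, b₂, 0, 0, 0, 0, 0, a₂, 0;
     x₁, 0, a₁, 0, 0, 0, b₁, 0, y₁;
     0, 0, 0, b₂, 0, a₂, 0, 0, 0;
     b₁, 0, y₁, 0, 0, 0, x₁, 0, a₁]

/-- unitarity conditions for `R₉`. -/
theorem stmt8 (a₁ a₂ b₁ b₂ x₁ y₁ x : ℂ) :
    (R9 a₁ a₂ b₁ b₂ x₁ y₁ x) * (R9 a₁ a₂ b₁ b₂ x₁ y₁ x).conjTranspose = 1 ↔
      (x * star x = 1 ∧
       (a₁ * star a₁ + b₁ * star b₁ + x₁ * star x₁ + y₁ * star y₁ = 1 ∧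
        x₁ * star a₁ + a₁ * star x₁ + y₁ * star b₁ + b₁ * star y₁ = 0 ∧
        x₁ * star b₁ + b₁ * star x₁ + y₁ * star a₁ + a₁ * star y₁ = 0 ∧
        a₁ * star b₁ + b₁ * star a₁ + x₁ * star y₁ + y₁ * star x₁ = 0) ∧
       (a₂ * star a₂ + b₂ * star b₂ = 1 ∧
        a₂ * star b₂ + b₂ * star a₂ = 0)) := by
  rw [← Matrix.ext_iff]
  simp only [R9, mul_apply, conjTranspose_apply, one_apply, Fin.forall_fin_succ,
    Fin.forall_fin_zero_pi, Fin.sum_univ_succ, Finset.sum_empty, Fin.isValue,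
    Matrix.cons_val_zero, Matrix.cons_val_succ, Matrix.cons_val', Matrix.of_apply,
    Matrix.vecHead, Matrix.vecTail, Function.comp]
  simp only [Fin.succ]
  norm_num [Fin.ext_iff]
  constructor
  · rintro ⟨⟨e1, e2, e3, e4⟩, ⟨e5, e6⟩, _, _, hx, _⟩
    exact ⟨hx, ⟨by linear_combination e1, by linear_combination e3,
      by linear_combination e2, by linear_combination e4⟩, e5, e6⟩
  · rintro ⟨h1, ⟨h2, h3, h4, h5⟩, h6, h7⟩
    refine ⟨⟨?_, ?_, ?_, ?_⟩, ⟨?_, ?_⟩, ⟨?_, ?_, ?_, ?_⟩, ⟨?_, ?_⟩, ?_, ⟨?_, ?_⟩,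
      ⟨?_, ?_, ?_, ?_⟩, ⟨?_, ?_⟩, ?_, ?_, ?_, ?_⟩ <;>
      first
        | linear_combination h1 | linear_combination h2 | linear_combination h3
        | linear_combination h4 | linear_combination h5 | linear_combination h6
        | linear_combination h7
end

section
/- Suppose the 9×9 complex matrix R̂₉ (with nonzero entries R̂₁₁=a₁, R̂₁₃=y₁, R̂₁₇=x₁, R̂₁₉=b₁, R̂₂₂=a₂, R̂₂₈=b₂, R̂₃₁=y₁, R̂₃₃=a₁, R̂₃₇=b₁, R̂₃₉=x₁, R̂₄₄=a₂, R̂₄₆=b₂, R̂₅₅=x, R̂₆₄=b₂, R̂₆₆=a₂, R̂₇₁=x₁, R̂₇₃=b₁, R̂₇₇=a₁, R̂₇₉=y₁, R̂₈₂=b₂, R̂₈₈=a₂, R̂₉₁=b₁, R̂₉₃=x₁, R̂₉₇=y₁, R̂₉₉=a₁, zeros elsewhere) can be written as a Kronecker product X⊗Y of two 3×3 complex matrices. Then a₂² = x·a₁. -/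
open Matrix

/-- The 9×9 matrix `R̂₉` of the paper. -/
noncomputable def Rhat9 (a₁ a₂ b₁ b₂ x₁ y₁ x : ℂ) : Matrix (Fin 9) (Fin 9) ℂ :=
  !![a₁, 0, y₁, 0, 0, 0, x₁, 0, b₁;
     0, a₂, 0, 0, 0, 0, 0, b₂, 0;
     y₁, 0, a₁, 0, 0, 0, b₁, 0, x₁;
     0, 0, 0, a₂, 0, b₂, 0, 0, 0;
     0, 0, 0, 0, x, 0, 0, 0, 0;
     0, 0, 0, b₂, 0, a₂, 0, 0, 0;
     x₁, 0, b₁, 0, 0, 0, a₁, 0, y₁;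
     0, b₂, 0, 0, 0, 0, 0, a₂, 0;
     b₁, 0, x₁, 0, 0, 0, y₁, 0, a₁]

/-- if `R̂₉` is a Kronecker product of two 3×3 matrices, then `a₂² = x·a₁`. -/
theorem stmt13 (a₁ a₂ b₁ b₂ x₁ y₁ x : ℂ)
    (h : ∃ X Y : Matrix (Fin 3) (Fin 3) ℂ, Rhat9 a₁ a₂ b₁ b₂ x₁ y₁ x = kron X Y) :
    a₂ ^ 2 = x * a₁ := by
  obtain ⟨X, Y, h⟩ := h
  have h00 := congrFun (congrFun h 0) 0
  have h11 := congrFun (congrFun h 1) 1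
  have h33 := congrFun (congrFun h 3) 3
  have h44 := congrFun (congrFun h 4) 4
  simp [Rhat9, kron, Fin.divNat, Fin.modNat, show ((0:Fin 9):ℕ)=0 from rfl,
    show ((1:Fin 9):ℕ)=1 from rfl, show ((3:Fin 9):ℕ)=3 from rfl,
    show ((4:Fin 9):ℕ)=4 from rfl, Matrix.cons_val_zero, Matrix.cons_val_one] at h00 h11 h33 h44
  rw [h00, h44, pow_two]; nth_rewrite 1 [h11]; rw [h33]; ring
end

section
/- If a₂² ≠ x·a₁, then the 9×9 matrix R̂₉ (defined with nonzero entries R̂₁₁=a₁, R̂₁₃=y₁, R̂₁₇=x₁, R̂₁₉=b₁, R̂₂₂=a₂, R̂₂₈=b₂, R̂₃₁=y₁, R̂₃₃=a₁, R̂₃₇=b₁, R̂₃₉=x₁, R̂₄₄=a₂, R̂₄₆=b₂, R̂₅₅=x, R̂₆₄=b₂, R̂₆₆=a₂, R̂₇₁=x₁, R̂₇₃=b₁, R̂₇₇=a₁, R̂₇₉=y₁, R̂₈₂=b₂, R̂₈₈=a₂, R̂₉₁=b₁, R̂₉₃=x₁, R̂₉₇=y₁, R̂₉₉=a₁, zeros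 elsewhere) cannot be factored as a Kronecker product X⊗Y of two 3×3 matrices. -/
open Matrix

/-- if `a₂² ≠ x·a₁` then `R̂₉` cannot be factored as a Kronecker
product of two 3×3 matrices. -/
theorem stmt14 (a₁ a₂ b₁ b₂ x₁ y₁ x : ℂ) (h : a₂ ^ 2 ≠ x * a₁) :
    ∀ X Y : Matrix (Fin 3) (Fin 3) ℂ, Rhat9 a₁ a₂ b₁ b₂ x₁ y₁ x ≠ kron X Y := by
  intro X Y heq
  apply h
  have e00 := congrFun (congrFun heq 0) 0
  have e11 := congrFun (congrFun heq 1) 1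
  have e33 := congrFun (congrFun heq 3) 3
  have e44 := congrFun (congrFun heq 4) 4
  simp only [Rhat9, kron, Fin.divNat, Fin.modNat] at e00 e11 e33 e44
  norm_num [Matrix.cons_val', Matrix.cons_val_zero, Matrix.cons_val_one] at e00 e11 e33 e44
  have h33 : a₂ = X 1 1 * Y 0 0 := e33
  have h44 : x = X 1 1 * Y 1 1 := e44
  rw [pow_two]
  nth_rewrite 2 [h33]
  rw [e11, h44, e00]
  ring
end

section
/- For any n ≥ 1 and any n²×n² matrix R satisfying the condition of Lemma (equivalent definition): R_{v,w} = a(t,s) when v=(t−1)n+s, w=(s−1)n+t; R_{v,w} = b(t,s) when v=(t−1)n+s, w=n²+1−[(s−1)n+t]; R_{v,w} = x(t,s) when v=(t−1)n+s, w=n²+1−[(n−s)n+t]; R_{v,w} = y(t,s) when v=(t−1)n+s, w=(n−s)n+t; all other entries zero; where a,b,x,y: {1,…,n}² → C satisfy f(n−t+1,s) = f(t,n−s+1) = f(t,s) for f ∈ {a,b,x,y} (and in the odd-n case with t=(n+1)/2 or s=(n+1)/2, x(t,s)=b(t,s) and y(t,s)=a(t,s), and a=b=x=y at t=s=(n+1)/2)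 — then R satisfies the braided Yang–Baxter equation (R⊗Iₙ)(Iₙ⊗R)(R⊗Iₙ) = (Iₙ⊗R)(R⊗Iₙ)(Iₙ⊗R). -/
open Matrix

lemma idx_lt {n k : ℕ} (r : Fin n) (v : Fin k) : r.val * k + v.val < n * k := by
  have h1 := r.isLt
  have h2 := v.isLt
  nlinarith

/-- The index `(t,s) ↦ (t−1)n+s` of the paper, 0-based: `(t,s) ↦ t·n+s`. -/
def idx {n : ℕ} (t s : Fin n) : Fin (n * n) := ⟨t.val * n + s.val, idx_lt t s⟩

def gidx {m k : ℕ} (r : Fin m) (v : Fin k) : Fin (m * k) := ⟨r.val * k + v.val, idx_lt r v⟩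

lemma gidx_divNat {m k : ℕ} (r : Fin m) (v : Fin k) : (gidx r v).divNat = r := by
  have hk : 0 < k := v.pos
  ext
  show (r.val * k + v.val) / k = r.val
  rw [add_comm, Nat.add_mul_div_right _ _ hk, Nat.div_eq_of_lt v.isLt, Nat.zero_add]

lemma gidx_modNat {m k : ℕ} (r : Fin m) (v : Fin k) : (gidx r v).modNat = v := by
  ext
  show (r.val * k + v.val) % k = v.val
  rw [add_comm, Nat.add_mul_mod_self_right, Nat.mod_eq_of_lt v.isLt]

lemma gidx_surj {m k : ℕ} (w : Fin (m * k)) : w = gidx w.divNat w.modNat := by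
  ext
  show w.val = w.val / k * k + w.val % k
  exact (Nat.div_add_mod' w.val k).symm

lemma gidx_inj {m k : ℕ} {r r' : Fin m} {v v' : Fin k} (h : gidx r v = gidx r' v') :
    r = r' ∧ v = v' := by
  constructor
  · rw [← gidx_divNat r v, h, gidx_divNat]
  · rw [← gidx_modNat r v, h, gidx_modNat]

lemma sum_gidx {m k : ℕ} (f : Fin (m * k) → ℂ) :
    ∑ w, f w = ∑ r, ∑ v, f (gidx r v) := by
  have : ∑ r, ∑ v, f (gidx r v) = ∑ p : Fin m × Fin k, f (gidx p.1 p.2) :=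
    by rw [Fintype.sum_prod_type]
  rw [this]
  apply Fintype.sum_bijective (fun w => ((w : Fin (m*k)).divNat, w.modNat))
  · constructor
    · intro w w' h
      simp only [Prod.mk.injEq] at h
      rw [gidx_surj w, gidx_surj w', h.1, h.2]
    · intro p
      exact ⟨gidx p.1 p.2, by simp only [gidx_divNat, gidx_modNat]⟩
  · intro w
    exact congrArg f (gidx_surj w)

lemma idx_eq_gidx {n : ℕ} (t s : Fin n) : idx t s = gidx t s := rfl

lemma surj3 {n : ℕ} (v : Fin (n*n*n)) : ∃ i j k : Fin n, v = gidx (idx i j) k :=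
  ⟨v.divNat.divNat, v.divNat.modNat, v.modNat, by
    conv_lhs => rw [gidx_surj v, gidx_surj v.divNat]
    rw [idx_eq_gidx]⟩

lemma cast_gidx {n : ℕ} (i j k : Fin n) :
    Fin.cast (mul_assoc n n n) (gidx (idx i j) k) = gidx i (idx j k) := by
  ext
  show (i.val * n + j.val) * n + k.val = i.val * (n*n) + (j.val * n + k.val)
  ring

lemma sum3C {n : ℕ} (f : Fin (n*n*n) → ℂ) :
    ∑ w, f w = ∑ α, ∑ β, ∑ γ, f (gidx (idx α β) γ) := by
  rw [sum_gidx f]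
  rw [sum_gidx (fun r : Fin (n*n) => ∑ v : Fin n, f (gidx r v))]
  simp only [idx_eq_gidx]

section
variable {n : ℕ} (a b x y : Fin n → Fin n → ℂ)

def Fm (t s u v : Fin n) : ℂ :=
  if u = s ∧ v = t then a t s
  else if u = s.rev ∧ v = t.rev then b t s
  else if u = s ∧ v = t.rev then x t s
  else if u = s.rev ∧ v = t then y t s
  else 0

lemma Fm_zero_u (t s u v : Fin n) (h1 : u ≠ s) (h2 : u ≠ s.rev) : Fm a b x y t s u v = 0 := by
  unfold Fm; split_ifs with c1 c2 c3 c4 <;> tauto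

lemma Fm_zero_v (t s u v : Fin n) (h1 : v ≠ t) (h2 : v ≠ t.rev) : Fm a b x y t s u v = 0 := by
  unfold Fm; split_ifs with c1 c2 c3 c4 <;> tauto

lemma sum_supp (s : Fin n) (g : Fin n → ℂ) (h : ∀ u, u ≠ s → u ≠ s.rev → g u = 0) :
    ∑ u, g u = ∑ u ∈ ({s, s.rev} : Finset (Fin n)), g u := by
  symm
  apply Finset.sum_subset (Finset.subset_univ _)
  intro u _ hu
  simp only [Finset.mem_insert, Finset.mem_singleton, not_or] at hu
  exact h u hu.1 hu.2

set_option maxHeartbeats 4000000 in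
lemma key
    (ha : ∀ t s, a t.rev s = a t s ∧ a t s.rev = a t s)
    (hb : ∀ t s, b t.rev s = b t s ∧ b t s.rev = b t s)
    (hx : ∀ t s, x t.rev s = x t s ∧ x t s.rev = x t s)
    (hy : ∀ t s, y t.rev s = y t s ∧ y t s.rev = y t s)
    (hax : ∀ t s, t.rev = t → a t s = x t s ∧ b t s = y t s)
    (hay : ∀ t s, s.rev = s → a t s = y t s ∧ b t s = x t s)
    (i j k l m p : Fin n) :
    (∑ α, ∑ β, ∑ γ, Fm a b x y i j α β * Fm a b x y β k γ p * Fm a b x y α γ l m)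
    = ∑ β, ∑ γ, ∑ δ, Fm a b x y j k β γ * Fm a b x y i β l δ * Fm a b x y δ γ m p := by
  have sa1 : ∀ t s, a t.rev s = a t s := fun t s => (ha t s).1
  have sa2 : ∀ t s, a t s.rev = a t s := fun t s => (ha t s).2
  have sb1 : ∀ t s, b t.rev s = b t s := fun t s => (hb t s).1
  have sb2 : ∀ t s, b t s.rev = b t s := fun t s => (hb t s).2
  have sx1 : ∀ t s, x t.rev s = x t s := fun t s => (hx t s).1
  have sx2 : ∀ t s, x t s.rev = x t s := fun t s => (hx t s).2
  have sy1 : ∀ t s, y t.rev s = y t s := fun t s => (hy t s).1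
  have sy2 : ∀ t s, y t s.rev = y t s := fun t s => (hy t s).2
  have L : (∑ α, ∑ β, ∑ γ, Fm a b x y i j α β * Fm a b x y β k γ p * Fm a b x y α γ l m)
      = ∑ α ∈ ({j, j.rev} : Finset (Fin n)), ∑ β ∈ ({i, i.rev} : Finset (Fin n)),
          ∑ γ ∈ ({k, k.rev} : Finset (Fin n)),
          Fm a b x y i j α β * Fm a b x y β k γ p * Fm a b x y α γ l m := by
    rw [sum_supp j _ (fun α h1 h2 => by
      simp [Fm_zero_u a b x y i j α _ h1 h2])]
    refine Finset.sum_congr rfl (fun α _ => ?_)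
    rw [sum_supp i _ (fun β h1 h2 => by
      simp [Fm_zero_v a b x y i j α β h1 h2])]
    refine Finset.sum_congr rfl (fun β _ => ?_)
    rw [sum_supp k _ (fun γ h1 h2 => by
      simp [Fm_zero_u a b x y β k γ p h1 h2])]
  have Rr : (∑ β, ∑ γ, ∑ δ, Fm a b x y j k β γ * Fm a b x y i β l δ * Fm a b x y δ γ m p)
      = ∑ β ∈ ({k, k.rev} : Finset (Fin n)), ∑ γ ∈ ({j, j.rev} : Finset (Fin n)),
          ∑ δ ∈ ({i, i.rev} : Finset (Fin n)),
          Fm a b x y j k β γ * Fm a b x y i β l δ * Fm a b x y δ γ m p := by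
    rw [sum_supp k _ (fun β h1 h2 => by
      simp [Fm_zero_u a b x y j k β _ h1 h2])]
    refine Finset.sum_congr rfl (fun β _ => ?_)
    rw [sum_supp j _ (fun γ h1 h2 => by
      simp [Fm_zero_v a b x y j k β γ h1 h2])]
    refine Finset.sum_congr rfl (fun γ _ => ?_)
    rw [sum_supp i _ (fun δ h1 h2 => by
      simp [Fm_zero_v a b x y i β l δ h1 h2])]
  rw [L, Rr]
  clear L Rr
  by_cases hi : i.rev = i <;> by_cases hj : j.rev = j <;> by_cases hk : k.rev = k
  · -- i= j= k=
    have fi1 : ∀ s, x i s = a i s := fun s => ((hax i s hi).1).symm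
    have fi2 : ∀ s, y i s = b i s := fun s => ((hax i s hi).2).symm
    have fj1 : ∀ s, x j s = a j s := fun s => ((hax j s hj).1).symm
    have fj2 : ∀ s, y j s = b j s := fun s => ((hax j s hj).2).symm
    have gj1 : ∀ t, y t j = a t j := fun t => ((hay t j hj).1).symm
    have gj2 : ∀ t, x t j = b t j := fun t => ((hay t j hj).2).symm
    have gk1 : ∀ t, y t k = a t k := fun t => ((hay t k hk).1).symm
    have gk2 : ∀ t, x t k = b t k := fun t => ((hay t k hk).2).symm
    have cij : b i j = a i j := (hax i j hi).2.trans (hay i j hj).1.symm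
    have cik : b i k = a i k := (hax i k hi).2.trans (hay i k hk).1.symm
    have cjk : b j k = a j k := (hax j k hj).2.trans (hay j k hk).1.symm
    simp only [hi, hj, hk, Finset.pair_eq_singleton, Finset.sum_singleton]
    simp only [Fm, Fin.rev_rev, hi, hj, hk, sa1, sa2, sb1, sb2, sx1, sx2, sy1, sy2, fi1, fi2, fj1, fj2, gj1, gj2, gk1, gk2, cij, cik, cjk, and_true, true_and, and_false, false_and, if_true, if_false, eq_self_iff_true]
    simp only [ite_and]
    split_ifs <;> (first | ring1 | (exfalso; simp_all))
  · -- i= j= k!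
    have fi1 : ∀ s, x i s = a i s := fun s => ((hax i s hi).1).symm
    have fi2 : ∀ s, y i s = b i s := fun s => ((hax i s hi).2).symm
    have fj1 : ∀ s, x j s = a j s := fun s => ((hax j s hj).1).symm
    have fj2 : ∀ s, y j s = b j s := fun s => ((hax j s hj).2).symm
    have gj1 : ∀ t, y t j = a t j := fun t => ((hay t j hj).1).symm
    have gj2 : ∀ t, x t j = b t j := fun t => ((hay t j hj).2).symm
    have cij : b i j = a i j := (hax i j hi).2.trans (hay i j hj).1.symm
    have hk' : ¬ k = k.rev := fun h => hk h.symm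
    simp only [hi, hj, Finset.pair_eq_singleton, Finset.sum_singleton]
    simp only [Finset.sum_pair (Ne.symm hk)]
    simp only [Fm, Fin.rev_rev, hi, hj, hk, hk', sa1, sa2, sb1, sb2, sx1, sx2, sy1, sy2, fi1, fi2, fj1, fj2, gj1, gj2, cij, and_true, true_and, and_false, false_and, if_true, if_false, eq_self_iff_true]
    simp only [ite_and]
    split_ifs <;> (first | ring1 | (exfalso; simp_all))
  · -- i= j! k=
    have fi1 : ∀ s, x i s = a i s := fun s => ((hax i s hi).1).symm
    have fi2 : ∀ s, y i s = b i s := fun s => ((hax i s hi).2).symm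
    have gk1 : ∀ t, y t k = a t k := fun t => ((hay t k hk).1).symm
    have gk2 : ∀ t, x t k = b t k := fun t => ((hay t k hk).2).symm
    have cik : b i k = a i k := (hax i k hi).2.trans (hay i k hk).1.symm
    have hj' : ¬ j = j.rev := fun h => hj h.symm
    simp only [hi, hk, Finset.pair_eq_singleton, Finset.sum_singleton]
    simp only [Finset.sum_pair (Ne.symm hj)]
    simp only [Fm, Fin.rev_rev, hi, hk, hj, hj', sa1, sa2, sb1, sb2, sx1, sx2, sy1, sy2, fi1, fi2, gk1, gk2, cik, and_true, true_and, and_false, false_and, if_true, if_false, eq_self_iff_true]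
    simp only [ite_and]
    split_ifs <;> (first | ring1 | (exfalso; simp_all))
  · -- i= j! k!
    have fi1 : ∀ s, x i s = a i s := fun s => ((hax i s hi).1).symm
    have fi2 : ∀ s, y i s = b i s := fun s => ((hax i s hi).2).symm
    have hj' : ¬ j = j.rev := fun h => hj h.symm
    have hk' : ¬ k = k.rev := fun h => hk h.symm
    simp only [hi, Finset.pair_eq_singleton, Finset.sum_singleton]
    simp only [Finset.sum_pair (Ne.symm hj), Finset.sum_pair (Ne.symm hk)]
    simp only [Fm, Fin.rev_rev, hi, hj, hj', hk, hk', sa1, sa2, sb1, sb2, sx1, sx2, sy1, sy2, fi1, fi2, and_true, true_and, and_false, false_and, if_true, if_false, eq_self_iff_true]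
    simp only [ite_and]
    split_ifs <;> (first | ring1 | (exfalso; simp_all))
  · -- i! j= k=
    have fj1 : ∀ s, x j s = a j s := fun s => ((hax j s hj).1).symm
    have fj2 : ∀ s, y j s = b j s := fun s => ((hax j s hj).2).symm
    have gj1 : ∀ t, y t j = a t j := fun t => ((hay t j hj).1).symm
    have gj2 : ∀ t, x t j = b t j := fun t => ((hay t j hj).2).symm
    have gk1 : ∀ t, y t k = a t k := fun t => ((hay t k hk).1).symm
    have gk2 : ∀ t, x t k = b t k := fun t => ((hay t k hk).2).symm
    have cjk : b j k = a j k := (hax j k hj).2.trans (hay j k hk).1.symm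
    have hi' : ¬ i = i.rev := fun h => hi h.symm
    simp only [hj, hk, Finset.pair_eq_singleton, Finset.sum_singleton]
    simp only [Finset.sum_pair (Ne.symm hi)]
    simp only [Fm, Fin.rev_rev, hj, hk, hi, hi', sa1, sa2, sb1, sb2, sx1, sx2, sy1, sy2, fj1, fj2, gj1, gj2, gk1, gk2, cjk, and_true, true_and, and_false, false_and, if_true, if_false, eq_self_iff_true]
    simp only [ite_and]
    split_ifs <;> (first | ring1 | (exfalso; simp_all))
  · -- i! j= k!
    have fj1 : ∀ s, x j s = a j s := fun s => ((hax j s hj).1).symm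
    have fj2 : ∀ s, y j s = b j s := fun s => ((hax j s hj).2).symm
    have gj1 : ∀ t, y t j = a t j := fun t => ((hay t j hj).1).symm
    have gj2 : ∀ t, x t j = b t j := fun t => ((hay t j hj).2).symm
    have hi' : ¬ i = i.rev := fun h => hi h.symm
    have hk' : ¬ k = k.rev := fun h => hk h.symm
    simp only [hj, Finset.pair_eq_singleton, Finset.sum_singleton]
    simp only [Finset.sum_pair (Ne.symm hk), Finset.sum_pair (Ne.symm hi)]
    simp only [Fm, Fin.rev_rev, hj, hi, hi', hk, hk', sa1, sa2, sb1, sb2, sx1, sx2, sy1, sy2, fj1, fj2, gj1, gj2, and_true, true_and, and_false, false_and, if_true, if_false, eq_self_iff_true]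
    simp only [ite_and]
    split_ifs <;> (first | ring1 | (exfalso; simp_all))
  · -- i! j! k=
    have gk1 : ∀ t, y t k = a t k := fun t => ((hay t k hk).1).symm
    have gk2 : ∀ t, x t k = b t k := fun t => ((hay t k hk).2).symm
    have hi' : ¬ i = i.rev := fun h => hi h.symm
    have hj' : ¬ j = j.rev := fun h => hj h.symm
    simp only [hk, Finset.pair_eq_singleton, Finset.sum_singleton]
    simp only [Finset.sum_pair (Ne.symm hj), Finset.sum_pair (Ne.symm hi)]
    simp only [Fm, Fin.rev_rev, hk, hi, hi', hj, hj', sa1, sa2, sb1, sb2, sx1, sx2, sy1, sy2, gk1, gk2, and_true, true_and, and_false, false_and, if_true, if_false, eq_self_iff_true]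
    simp only [ite_and]
    split_ifs <;> (first | ring1 | (exfalso; simp_all))
  · -- i! j! k!
    have hi' : ¬ i = i.rev := fun h => hi h.symm
    have hj' : ¬ j = j.rev := fun h => hj h.symm
    have hk' : ¬ k = k.rev := fun h => hk h.symm
    simp only [Finset.sum_pair (Ne.symm hj), Finset.sum_pair (Ne.symm hk), Finset.sum_pair (Ne.symm hi)]
    simp only [Fm, Fin.rev_rev, hi, hi', hj, hj', hk, hk', sa1, sa2, sb1, sb2, sx1, sx2, sy1, sy2, and_true, true_and, and_false, false_and, if_true, if_false, eq_self_iff_true]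
    simp only [ite_and]
    split_ifs <;> (first | ring1 | (exfalso; simp_all))
end


set_option maxHeartbeats 1000000 in
/-- any `n²×n²` matrix `R` built from functions `a,b,x,y` as in the
paper's equivalent definition (Lemma: `R_{v,w} = a(t,s)` at `v=(t−1)n+s`, `w=(s−1)n+t`;
`b(t,s)` at `w = n²+1−[(s−1)n+t]`; `x(t,s)` at `w = n²+1−[(n−s)n+t]`; `y(t,s)` at
`w=(n−s)n+t`; zero elsewhere), where the functions satisfy the reflection symmetries
`f(n−t+1,s)=f(t,n−s+1)=f(t,s)` (expressed via `Fin.rev`), together with the odd-`n`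
conditions at the central index (`t.rev = t` characterizes `t = (n+1)/2`), satisfies
the braided Yang–Baxter equation. -/
theorem stmt16 (n : ℕ) (hn : 1 ≤ n) (a b x y : Fin n → Fin n → ℂ)
    (R : Matrix (Fin (n * n)) (Fin (n * n)) ℂ)
    (ha : ∀ t s, a t.rev s = a t s ∧ a t s.rev = a t s)
    (hb : ∀ t s, b t.rev s = b t s ∧ b t s.rev = b t s)
    (hx : ∀ t s, x t.rev s = x t s ∧ x t s.rev = x t s)
    (hy : ∀ t s, y t.rev s = y t s ∧ y t s.rev = y t s)
    (hodd : ∀ t s : Fin n, (t.rev = t ∨ s.rev = s) → t ≠ s →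
      x t s = b t s ∧ y t s = a t s)
    (hcenter : ∀ t s : Fin n, t.rev = t → s.rev = s →
      a t s = b t s ∧ b t s = x t s ∧ x t s = y t s)
    (hRa : ∀ t s, R (idx t s) (idx s t) = a t s)
    (hRb : ∀ t s, R (idx t s) (idx s.rev t.rev) = b t s)
    (hRx : ∀ t s, R (idx t s) (idx s t.rev) = x t s)
    (hRy : ∀ t s, R (idx t s) (idx s.rev t) = y t s)
    (hR0 : ∀ v w : Fin (n * n),
      w ≠ idx v.modNat v.divNat → w ≠ idx v.modNat v.divNat.rev →
      w ≠ idx v.modNat.rev v.divNat → w ≠ idx v.modNat.rev v.divNat.rev →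
      R v w = 0) :
    let In : Matrix (Fin n) (Fin n) ℂ := 1
    let RI := kron R In
    let IR : Matrix (Fin (n * n * n)) (Fin (n * n * n)) ℂ :=
      (kron In R).submatrix (Fin.cast (mul_assoc n n n)) (Fin.cast (mul_assoc n n n))
    RI * IR * RI = IR * RI * IR := by
  intro In RI IR
  have hax : ∀ t s : Fin n, t.rev = t → a t s = x t s ∧ b t s = y t s := by
    intro t s ht
    constructor
    · rw [← hRa t s, ← hRx t s, ht]
    · rw [← hRb t s, ← hRy t s, ht]
  have hay : ∀ t s : Fin n, s.rev = s → a t s = y t s ∧ b t s = x t s := by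
    intro t s hs
    constructor
    · rw [← hRa t s, ← hRy t s, hs]
    · rw [← hRb t s, ← hRx t s, hs]
  have hRF : ∀ t s u v : Fin n, R (idx t s) (idx u v) = Fm a b x y t s u v := by
    intro t s u v
    unfold Fm
    split_ifs with c1 c2 c3 c4
    · obtain ⟨rfl, rfl⟩ := c1; exact hRa _ _
    · obtain ⟨rfl, rfl⟩ := c2; exact hRb _ _
    · obtain ⟨rfl, rfl⟩ := c3; exact hRx _ _
    · obtain ⟨rfl, rfl⟩ := c4; exact hRy _ _
    · apply hR0 <;>
        simp only [idx_eq_gidx, gidx_modNat, gidx_divNat] <;>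
        · intro h
          obtain ⟨h1, h2⟩ := gidx_inj h
          tauto
  have RIapp : ∀ (q r : Fin (n*n)) (c d : Fin n),
      RI (gidx q c) (gidx r d) = R q r * (if c = d then (1:ℂ) else 0) := by
    intro q r c d
    show R (gidx q c).divNat (gidx r d).divNat * In (gidx q c).modNat (gidx r d).modNat = _
    rw [gidx_divNat, gidx_divNat, gidx_modNat, gidx_modNat]
    rfl
  have IRapp : ∀ (i j k α β γ : Fin n),
      IR (gidx (idx i j) k) (gidx (idx α β) γ)
        = (if i = α then (1:ℂ) else 0) * R (idx j k) (idx β γ) := by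
    intro i j k α β γ
    show (kron In R) (Fin.cast (mul_assoc n n n) (gidx (idx i j) k))
        (Fin.cast (mul_assoc n n n) (gidx (idx α β) γ)) = _
    rw [cast_gidx, cast_gidx]
    show In (gidx i (idx j k)).divNat (gidx α (idx β γ)).divNat
        * R (gidx i (idx j k)).modNat (gidx α (idx β γ)).modNat = _
    rw [gidx_divNat, gidx_divNat, gidx_modNat, gidx_modNat]
    rfl
  ext v w
  obtain ⟨i, j, k, rfl⟩ := surj3 v
  obtain ⟨l, m, p, rfl⟩ := surj3 w
  have hL : (RI * IR * RI) (gidx (idx i j) k) (gidx (idx l m) p)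
      = ∑ α, ∑ β, ∑ γ, Fm a b x y i j α β * Fm a b x y β k γ p * Fm a b x y α γ l m := by
    simp only [Matrix.mul_apply, sum3C, RIapp, IRapp, hRF, mul_ite, ite_mul, mul_zero,
      zero_mul, mul_one, one_mul, Finset.sum_ite_eq, Finset.sum_ite_eq', Finset.mem_univ,
      if_true, Finset.mul_sum, Finset.sum_mul, Finset.sum_ite_irrel, Finset.sum_const_zero]
    exact Finset.sum_congr rfl fun α _ => Finset.sum_comm
  have hR' : (IR * RI * IR) (gidx (idx i j) k) (gidx (idx l m) p)
      = ∑ β, ∑ γ, ∑ δ, Fm a b x y j k β γ * Fm a b x y i β l δ * Fm a b x y δ γ m p := by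
    simp only [Matrix.mul_apply, sum3C, RIapp, IRapp, hRF, mul_ite, ite_mul, mul_zero,
      zero_mul, mul_one, one_mul, Finset.sum_ite_eq, Finset.sum_ite_eq', Finset.mem_univ,
      if_true, Finset.mul_sum, Finset.sum_mul, Finset.sum_ite_irrel, Finset.sum_const_zero]
    conv_lhs => rw [Finset.sum_comm]
    refine (Finset.sum_congr rfl fun a _ => Finset.sum_comm).trans ?_
    rw [Finset.sum_comm]
  rw [hL, hR']
  exact key a b x y ha hb hx hy hax hay i j k l m p
end
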